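/- (Safety of the EUI pruning strategy.) Let D be a finite database of q-sequences, let t' be a sequence with at least two item occurrences, and let ξ ∈ ℝ be a threshold. If RSU(t') ≤ ξ, then u(t') ≤ ξ and every sequence t'' having t' as an extension-prefix satisfies u(t'') ≤ ξ; hence neither t' nor any of its descendants can have utility exceeding ξ. -/

import Mathlib

open scoped Classical

namespace TKUS

variable {I : Type*} [Fintype I] [LinearOrder I]

/-- `p` is the (0-based) position list of an instance of the sequence `t`
in the q-sequence `s`. -/
def IsInstance (s : List (I →₀ ℕ)) (t : List (Finset I)) (p : List ℕ) : Prop :=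
  p.length = t.length ∧ p.Chain' (· < ·) ∧
    ∀ v < t.length, p.getD v 0 < s.length ∧
      ∀ i ∈ t.getD v ∅, 0 < s.getD (p.getD v 0) 0 i

/-- `t ⊑ s` : `t` has at least one instance in `s`. -/
def Contains (s : List (I →₀ ℕ)) (t : List (Finset I)) : Prop :=
  ∃ p, IsInstance s t p

/-- `u(t,p,s)` : utility of `t` at position `p` in `s`. -/
def uPos (eu : I → ℝ) (s : List (I →₀ ℕ)) (t : List (Finset I)) (p : List ℕ) : ℝ :=
  ∑ v ∈ Finset.range t.length, ∑ i ∈ t.getD v ∅,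
    (s.getD (p.getD v 0) 0 i : ℝ) * eu i

/-- `u(t,s)` : the maximum utility over all instances of `t` in `s` (`0` if none). -/
noncomputable def uSeq (eu : I → ℝ) (s : List (I →₀ ℕ)) (t : List (Finset I)) : ℝ :=
  sSup {x | ∃ p, IsInstance s t p ∧ x = uPos eu s t p}

/-- the greatest item of the last itemset of `t`, as an element of `WithBot I`. -/
def iLast (t : List (Finset I)) : WithBot I :=
  (t.getLast?.getD ∅).max

/-- `u_rest(t,k,s)` : remaining utility of `t` at extension position `k` in `s`. -/
def uRest (eu : I → ℝ) (s : List (I →₀ ℕ)) (t : List (Finset I)) (k : ℕ) : ℝ :=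
  ∑ j ∈ Finset.range s.length, ∑ i ∈ (s.getD j 0).support,
    if k < j ∨ (j = k ∧ iLast t < (i : WithBot I)) then (s.getD j 0 i : ℝ) * eu i else 0

/-- `k` is an extension position of `t` in `s`. -/
def ExtPos (s : List (I →₀ ℕ)) (t : List (Finset I)) (k : ℕ) : Prop :=
  ∃ p, IsInstance s t p ∧ p.getLast?.getD 0 = k

/-- the pivot : the least extension position of `t` in `s`. -/
noncomputable def pivot (s : List (I →₀ ℕ)) (t : List (Finset I)) : ℕ :=
  sInf {k | ExtPos s t k}

/-- `u_rest(t,s)` : remaining utility of `t` at the pivot. -/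
noncomputable def uRestSeq (eu : I → ℝ) (s : List (I →₀ ℕ)) (t : List (Finset I)) : ℝ :=
  uRest eu s t (pivot s t)

/-- `PEU(t,p,s)`. -/
noncomputable def PEUpos (eu : I → ℝ) (s : List (I →₀ ℕ)) (t : List (Finset I))
    (p : List ℕ) : ℝ :=
  if 0 < uRest eu s t (p.getLast?.getD 0) then
    uPos eu s t p + uRest eu s t (p.getLast?.getD 0)
  else 0

/-- `PEU(t,s)` : maximum of `PEU(t,p,s)` over all instances. -/
noncomputable def PEUseq (eu : I → ℝ) (s : List (I →₀ ℕ)) (t : List (Finset I)) : ℝ :=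
  sSup {x | ∃ p, IsInstance s t p ∧ x = PEUpos eu s t p}

/-- `t'` is an extension-prefix of `t` : `t' = ⟨X₁,…,X_{r−1}, X'_r⟩` where
`X'_r` is a nonempty lower segment of `X_r`. -/
def ExtPrefix (t' t : List (Finset I)) : Prop :=
  t' ≠ [] ∧ t'.length ≤ t.length ∧
    (∀ v, v + 1 < t'.length → t'.getD v ∅ = t.getD v ∅) ∧
    (t'.getD (t'.length - 1) ∅).Nonempty ∧
    t'.getD (t'.length - 1) ∅ ⊆ t.getD (t'.length - 1) ∅ ∧
    ∀ a ∈ t.getD (t'.length - 1) ∅ \ t'.getD (t'.length - 1) ∅,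
      ∀ b ∈ t'.getD (t'.length - 1) ∅, b < a

/-- `t'` is a proper extension-prefix of `t`. -/
def ProperExtPrefix (t' t : List (Finset I)) : Prop :=
  ExtPrefix t' t ∧ t' ≠ t

/-- the length (total number of item occurrences) of a sequence. -/
def seqLen (t : List (Finset I)) : ℕ :=
  (t.map Finset.card).sum

/-- remove the greatest item from a finite itemset. -/
def delMax (X : Finset I) : Finset I :=
  X.filter fun i => (i : WithBot I) ≠ X.max

/-- the parent of a sequence: delete the greatest item of the last itemset
(dropping that itemset entirely if it becomes empty). -/
def parent (t : List (Finset I)) : List (Finset I) :=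
  match t.getLast? with
  | none => []
  | some X => if delMax X = ∅ then t.dropLast else t.dropLast ++ [delMax X]

/-- `u(s)` : utility of a whole q-sequence. -/
def uQ (eu : I → ℝ) (s : List (I →₀ ℕ)) : ℝ :=
  ∑ j ∈ Finset.range s.length, ∑ i ∈ (s.getD j 0).support,
    (s.getD j 0 i : ℝ) * eu i

/-- `u(t)` : utility of `t` in a database `D`. -/
noncomputable def uDB (eu : I → ℝ) (D : Multiset (List (I →₀ ℕ)))
    (t : List (Finset I)) : ℝ :=
  (D.map fun s => if Contains s t then uSeq eu s t else 0).sum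

/-- `PEU(t)` over a database. -/
noncomputable def PEUDB (eu : I → ℝ) (D : Multiset (List (I →₀ ℕ)))
    (t : List (Finset I)) : ℝ :=
  (D.map fun s => if Contains s t then PEUseq eu s t else 0).sum

/-- `RSU(t,s)`. -/
noncomputable def RSUseq (eu : I → ℝ) (s : List (I →₀ ℕ)) (t : List (Finset I)) : ℝ :=
  if Contains s t then PEUseq eu s (parent t) else 0

/-- `RSU(t)` over a database. -/
noncomputable def RSUDB (eu : I → ℝ) (D : Multiset (List (I →₀ ℕ)))
    (t : List (Finset I)) : ℝ :=
  (D.map fun s => RSUseq eu s t).sum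

/-- `SWU(t)` over a database. -/
noncomputable def SWUDB (eu : I → ℝ) (D : Multiset (List (I →₀ ℕ)))
    (t : List (Finset I)) : ℝ :=
  (D.map fun s => if Contains s t then uQ eu s else 0).sum

/-- `SEU(t)` over a database. -/
noncomputable def SEUDB (eu : I → ℝ) (D : Multiset (List (I →₀ ℕ)))
    (t : List (Finset I)) : ℝ :=
  (D.map fun s => if Contains s t then uSeq eu s t + uRestSeq eu s t else 0).sum

/-- `t' ⊴ t` : `t'` is a subsequence of `t`. -/
def Subseq (t' t : List (Finset I)) : Prop :=
  ∃ p : List ℕ, p.length = t'.length ∧ p.Chain' (· < ·) ∧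
    ∀ v < t'.length, p.getD v 0 < t.length ∧ t'.getD v ∅ ⊆ t.getD (p.getD v 0) ∅

/-- `t` is a top-k HUSP with respect to the candidate set `C`. -/
def IsTopK (eu : I → ℝ) (D : Multiset (List (I →₀ ℕ))) (k : ℕ)
    (C : Finset (List (Finset I))) (t : List (Finset I)) : Prop :=
  t ∈ C ∧ (C.filter fun r => uDB eu D t < uDB eu D r).card < k


-- ===================== auxiliary lemmas =====================

section Aux

omit [Fintype I] [LinearOrder I] in
lemma getD_take' (p : List ℕ) (n v : ℕ) (h : v < n) : (p.take n).getD v 0 = p.getD v 0 := by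
  simp [List.getD_eq_getElem?_getD, List.getElem?_take, h]

omit [Fintype I] [LinearOrder I] in
lemma getLast?_getD (l : List ℕ) (h : l ≠ []) : l.getLast?.getD 0 = l.getD (l.length - 1) 0 := by
  have hl : l.length - 1 < l.length := by cases l with | nil => simp at h | cons a t => simp
  rw [List.getLast?_eq_getLast h, List.getLast_eq_getElem]
  simp [List.getD_eq_getElem?_getD, List.getElem?_eq_getElem hl]

omit [Fintype I] [LinearOrder I] in
lemma chain'_getD_lt (p : List ℕ) (h : p.Chain' (· < ·)) {a b : ℕ} (hab : a < b)
    (hb : b < p.length) : p.getD a 0 < p.getD b 0 := by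
  replace h := List.isChain_iff_pairwise.1 h
  have := List.pairwise_iff_getElem.1 h a b (by omega) hb hab
  simpa [List.getD_eq_getElem?_getD, List.getElem?_eq_getElem, hb,
    (by omega : a < p.length)] using this

omit [Fintype I] [LinearOrder I] in
lemma getD_dropLast (l : List (Finset I)) (v : ℕ) (h : v < l.length - 1) :
    l.dropLast.getD v ∅ = l.getD v ∅ := by
  have h1 : v < l.dropLast.length := by simp; omega
  have h2 : v < l.length := by omega
  rw [List.getD_eq_getElem?_getD, List.getD_eq_getElem?_getD,
    List.getElem?_eq_getElem h1, List.getElem?_eq_getElem h2]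
  simp [List.getElem_dropLast]

omit [Fintype I] [LinearOrder I] in
lemma getD_append_lt (l : List (Finset I)) (X : Finset I) (v : ℕ) (h : v < l.length) :
    (l ++ [X]).getD v ∅ = l.getD v ∅ := by
  have h1 : v < (l ++ [X]).length := by simp; omega
  rw [List.getD_eq_getElem?_getD, List.getD_eq_getElem?_getD,
    List.getElem?_eq_getElem h1, List.getElem?_eq_getElem h]
  simp [List.getElem_append_left h]

omit [Fintype I] [LinearOrder I] in
lemma getD_append_len (l : List (Finset I)) (X : Finset I) :
    (l ++ [X]).getD l.length ∅ = X := by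
  simp [List.getD_eq_getElem?_getD]

omit [Fintype I] [LinearOrder I] in
lemma isInstance_take (s : List (I →₀ ℕ)) (t₀ t : List (Finset I)) (p : List ℕ)
    (hp : IsInstance s t p) (hlen : t₀.length ≤ t.length)
    (hsub : ∀ v < t₀.length, t₀.getD v ∅ ⊆ t.getD v ∅) :
    IsInstance s t₀ (p.take t₀.length) := by
  obtain ⟨hpl, hch, hpos⟩ := hp
  refine ⟨by simp [hpl]; omega, hch.prefix (List.take_prefix _ _), fun v hv => ?_⟩
  rw [getD_take' _ _ _ hv]
  obtain ⟨h1, h2⟩ := hpos v (lt_of_lt_of_le hv hlen)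
  exact ⟨h1, fun i hi => h2 i (hsub v hv hi)⟩

omit [Fintype I] [LinearOrder I] in
lemma sum_getD_le (p : List ℕ) (m N : ℕ) (hm : m ≤ p.length) (hchain : p.Chain' (· < ·))
    (hlt : ∀ v < m, p.getD v 0 < N) (g : ℕ → ℝ) (hg : ∀ j, 0 ≤ g j) :
    ∑ v ∈ Finset.range m, g (p.getD v 0) ≤ ∑ j ∈ Finset.range N, g j := by
  rw [← Finset.sum_image (f := g) (g := fun v => p.getD v 0) ?_]
  · refine Finset.sum_le_sum_of_subset_of_nonneg ?_ (fun j _ _ => hg j)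
    intro j hj
    simp only [Finset.mem_image, Finset.mem_range] at hj ⊢
    obtain ⟨v, hv, rfl⟩ := hj
    exact hlt v hv
  · intro a ha b hb hab
    simp only [Finset.mem_coe, Finset.mem_range] at ha hb
    rcases lt_trichotomy a b with h | h | h
    · exact absurd hab (ne_of_lt (chain'_getD_lt p hchain h (by omega)))
    · exact h
    · exact absurd hab.symm (ne_of_lt (chain'_getD_lt p hchain h (by omega)))

lemma extPrefix_sub {t' t'' : List (Finset I)} (hep : ExtPrefix t' t'') :
    ∀ v < t'.length, t'.getD v ∅ ⊆ t''.getD v ∅ := by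
  intro v hv
  rcases eq_or_lt_of_le (Nat.succ_le_of_lt hv) with h | h
  · have hv' : v = t'.length - 1 := by omega
    rw [hv']
    exact hep.2.2.2.2.1
  · rw [hep.2.2.1 v h]

lemma uPos_nonneg (eu : I → ℝ) (heu : ∀ i, 0 < eu i) (s : List (I →₀ ℕ))
    (t : List (Finset I)) (p : List ℕ) : 0 ≤ uPos eu s t p := by
  refine Finset.sum_nonneg fun v _ => Finset.sum_nonneg fun i _ => ?_
  exact mul_nonneg (Nat.cast_nonneg _) (le_of_lt (heu i))

lemma uQ_nonneg (eu : I → ℝ) (heu : ∀ i, 0 < eu i) (s : List (I →₀ ℕ)) : 0 ≤ uQ eu s := by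
  refine Finset.sum_nonneg fun j _ => Finset.sum_nonneg fun i _ => ?_
  exact mul_nonneg (Nat.cast_nonneg _) (le_of_lt (heu i))

lemma uRest_nonneg (eu : I → ℝ) (heu : ∀ i, 0 < eu i) (s : List (I →₀ ℕ))
    (t : List (Finset I)) (k : ℕ) : 0 ≤ uRest eu s t k := by
  refine Finset.sum_nonneg fun j _ => Finset.sum_nonneg fun i _ => ?_
  split
  · exact mul_nonneg (Nat.cast_nonneg _) (le_of_lt (heu i))
  · exact le_refl 0

lemma uRest_le_uQ (eu : I → ℝ) (heu : ∀ i, 0 < eu i) (s : List (I →₀ ℕ))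
    (t : List (Finset I)) (k : ℕ) : uRest eu s t k ≤ uQ eu s := by
  refine Finset.sum_le_sum fun j _ => Finset.sum_le_sum fun i _ => ?_
  split
  · exact le_refl _
  · exact mul_nonneg (Nat.cast_nonneg _) (le_of_lt (heu i))

lemma uPos_le_uQ (eu : I → ℝ) (heu : ∀ i, 0 < eu i) (s : List (I →₀ ℕ))
    (t : List (Finset I)) (p : List ℕ) (hp : IsInstance s t p) :
    uPos eu s t p ≤ uQ eu s := by
  obtain ⟨hpl, hch, hpos⟩ := hp
  have hg : ∀ j, (0:ℝ) ≤ ∑ i ∈ (s.getD j 0).support, (s.getD j 0 i : ℝ) * eu i :=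
    fun j => Finset.sum_nonneg fun i _ => mul_nonneg (Nat.cast_nonneg _) (le_of_lt (heu i))
  calc uPos eu s t p
      ≤ ∑ v ∈ Finset.range t.length,
          ∑ i ∈ (s.getD (p.getD v 0) 0).support, (s.getD (p.getD v 0) 0 i : ℝ) * eu i := by
        refine Finset.sum_le_sum fun v hv => ?_
        refine Finset.sum_le_sum_of_subset_of_nonneg ?_
          (fun i _ _ => mul_nonneg (Nat.cast_nonneg _) (le_of_lt (heu i)))
        intro i hi
        exact Finsupp.mem_support_iff.2 (Nat.pos_iff_ne_zero.1
          ((hpos v (Finset.mem_range.1 hv)).2 i hi))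
    _ ≤ uQ eu s := by
        refine sum_getD_le p t.length s.length (le_of_eq hpl.symm) hch
          (fun v hv => (hpos v hv).1) _ hg

lemma PEUpos_nonneg (eu : I → ℝ) (heu : ∀ i, 0 < eu i) (s : List (I →₀ ℕ))
    (t : List (Finset I)) (p : List ℕ) : 0 ≤ PEUpos eu s t p := by
  unfold PEUpos
  split
  · have := uPos_nonneg eu heu s t p
    linarith
  · exact le_refl 0

lemma bddAbove_PEU (eu : I → ℝ) (heu : ∀ i, 0 < eu i) (s : List (I →₀ ℕ))
    (t : List (Finset I)) :
    BddAbove {x | ∃ p, IsInstance s t p ∧ x = PEUpos eu s t p} := by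
  refine ⟨uQ eu s + uQ eu s, ?_⟩
  rintro x ⟨p, hp, rfl⟩
  unfold PEUpos
  split
  · exact add_le_add (uPos_le_uQ eu heu s t p hp) (uRest_le_uQ eu heu s t _)
  · have h1 := uQ_nonneg eu heu s
    linarith

lemma le_PEUseq (eu : I → ℝ) (heu : ∀ i, 0 < eu i) (s : List (I →₀ ℕ))
    (t : List (Finset I)) (q : List ℕ) (hq : IsInstance s t q) :
    PEUpos eu s t q ≤ PEUseq eu s t :=
  le_csSup (bddAbove_PEU eu heu s t) ⟨q, hq, rfl⟩

/-- The key lemma: any instance of `t''` is dominated by `PEU` of the parent of `t'`. -/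
lemma key_lemma (eu : I → ℝ) (heu : ∀ i, 0 < eu i) (s : List (I →₀ ℕ))
    (t' t'' : List (Finset I)) (h2 : 2 ≤ seqLen t')
    (hep : ExtPrefix t' t'') (p : List ℕ) (hp : IsInstance s t'' p) :
    ∃ q, IsInstance s (parent t') q ∧ uPos eu s t'' p ≤ PEUpos eu s (parent t') q := by
  have ht'ne : t' ≠ [] := hep.1
  set r := t'.length with hr
  have hr1 : 1 ≤ r := List.length_pos_iff.2 ht'ne
  set X' := t'.getD (r - 1) ∅ with hX'
  have hX'ne : X'.Nonempty := hep.2.2.2.1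
  set M := X'.max' hX'ne with hM
  have hMmem : M ∈ X' := X'.max'_mem hX'ne
  have hsub'' : ∀ v < r, t'.getD v ∅ ⊆ t''.getD v ∅ := extPrefix_sub hep
  have hrm : r ≤ t''.length := hep.2.1
  set m := t''.length with hm
  have hlast : t'.getLast? = some X' := by
    have hl : r - 1 < t'.length := by omega
    rw [List.getLast?_eq_getLast ht'ne, List.getLast_eq_getElem]
    congr 1
    rw [hX', List.getD_eq_getElem?_getD, List.getElem?_eq_getElem hl]
    rfl
  set α := parent t' with hα
  -- case-dependent facts
  have hfacts : 1 ≤ α.length ∧ α.length ≤ r ∧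
      (∀ v, v < α.length - 1 → α.getD v ∅ = t'.getD v ∅) ∧
      α.getD (α.length - 1) ∅ ⊆ t'.getD (α.length - 1) ∅ ∧
      M ∉ α.getD (r - 1) ∅ ∧
      (∀ i ∈ t''.getD (α.length - 1) ∅ \ α.getD (α.length - 1) ∅,
        iLast α < (i : WithBot I)) := by
    by_cases hB : delMax X' = ∅
    · -- the last itemset of t' is a singleton {M}; α = t'.dropLast
      have hXM : ∀ i ∈ X', i = M := by
        intro i hi
        by_contra hne
        have : i ∈ delMax X' := by
          refine Finset.mem_filter.2 ⟨hi, ?_⟩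
          rw [← Finset.coe_max' hX'ne]
          exact_mod_cast fun h => hne (WithBot.coe_injective h)
        rw [hB] at this
        exact absurd this (Finset.notMem_empty i)
      have hr2 : 2 ≤ r := by
        by_contra hlt
        have hreq : r = 1 := by omega
        obtain ⟨a, ha⟩ := List.length_eq_one_iff.1 hreq
        have hXa : X' = a := by rw [hX', hreq, ha]; rfl
        have hcard : a.card ≤ 1 := by
          rw [← hXa]
          calc X'.card ≤ ({M} : Finset I).card :=
              Finset.card_le_card (fun i hi => by simp [hXM i hi])
            _ = 1 := Finset.card_singleton M
        have : seqLen t' = a.card := by rw [ha]; simp [seqLen]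
        omega
      have hαeq : α = t'.dropLast := by
        rw [hα]; unfold parent; rw [hlast]; simp [hB]
      have hαlen : α.length = r - 1 := by rw [hαeq]; simp; omega
      refine ⟨by omega, by omega, ?_, ?_, ?_, ?_⟩
      · intro v hv
        rw [hαeq]
        exact getD_dropLast t' v (by omega)
      · rw [hαlen, hαeq, getD_dropLast t' (r - 1 - 1) (by omega)]
      · rw [hαeq, List.getD_eq_default _ _ (by rw [List.length_dropLast])]
        exact Finset.notMem_empty M
      · intro i hi
        exfalso
        rw [hαlen] at hi
        have he1 : α.getD (r - 1 - 1) ∅ = t'.getD (r - 1 - 1) ∅ := by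
          rw [hαeq]; exact getD_dropLast t' _ (by omega)
        have he2 : t'.getD (r - 1 - 1) ∅ = t''.getD (r - 1 - 1) ∅ :=
          hep.2.2.1 _ (by omega)
        rw [he1, he2] at hi
        simp at hi
    · -- α = t'.dropLast ++ [delMax X']
      have hdne : (delMax X').Nonempty := Finset.nonempty_iff_ne_empty.2 hB
      have hαeq : α = t'.dropLast ++ [delMax X'] := by
        rw [hα]; unfold parent; rw [hlast]; simp [hB]
      have hαlen : α.length = r := by rw [hαeq]; simp; omega
      have hdl : t'.dropLast.length = r - 1 := by simp; omega
      have hgetlast : α.getD (r - 1) ∅ = delMax X' := by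
        rw [hαeq, show r - 1 = t'.dropLast.length by rw [List.length_dropLast]]
        exact getD_append_len _ _
      have hMnot : M ∉ delMax X' := by
        intro h
        have := (Finset.mem_filter.1 h).2
        rw [← Finset.coe_max' hX'ne] at this
        exact this rfl
      have hMlt : ∀ i ∈ t''.getD (r - 1) ∅, i ∉ delMax X' → ∀ b ∈ delMax X', b < i := by
        intro i hi hni b hb
        obtain ⟨hbX, hbne⟩ := Finset.mem_filter.1 hb
        have hbM : b ≠ M := by
          intro h
          exact hbne (by rw [h, ← Finset.coe_max' hX'ne])
        by_cases hiX : i ∈ X'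
        · have hiM : i = M := by
            by_contra hne
            exact hni (Finset.mem_filter.2 ⟨hiX, by
              rw [← Finset.coe_max' hX'ne]
              exact_mod_cast fun h => hne (WithBot.coe_injective h)⟩)
          rw [hiM]
          exact lt_of_le_of_ne (X'.le_max' b hbX) hbM
        · exact hep.2.2.2.2.2 i (Finset.mem_sdiff.2 ⟨hi, hiX⟩) b hbX
      have hiLast : iLast α = ((delMax X').max' hdne : WithBot I) := by
        rw [hαeq]
        unfold iLast
        simp [Finset.coe_max' hdne]
      refine ⟨by omega, by omega, ?_, ?_, ?_, ?_⟩
      · intro v hv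
        rw [hαlen] at hv
        rw [hαeq, getD_append_lt _ _ v (by omega), getD_dropLast t' v (by omega)]
      · rw [hαlen, hgetlast]
        intro i hi
        exact (Finset.mem_filter.1 hi).1
      · rw [hgetlast]
        exact hMnot
      · intro i hi
        rw [hαlen, hgetlast] at hi
        obtain ⟨hi1, hi2⟩ := Finset.mem_sdiff.1 hi
        rw [hiLast, WithBot.coe_lt_coe]
        exact hMlt i hi1 hi2 _ ((delMax X').max'_mem hdne)
  obtain ⟨hn1, hnr, hF2, hF3, hF4, hF5⟩ := hfacts
  set n := α.length with hn
  have hpl : p.length = m := hp.1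
  have hnm : n ≤ m := le_trans hnr hrm
  have hαsub : ∀ v < n, α.getD v ∅ ⊆ t''.getD v ∅ := by
    intro v hv
    rcases lt_or_ge v (n - 1) with h | h
    · rw [hF2 v h]
      exact hsub'' v (by omega)
    · have hv' : v = n - 1 := by omega
      rw [hv']
      exact hF3.trans (hsub'' (n - 1) (by omega))
  have hq : IsInstance s α (p.take n) := isInstance_take s α t'' p hp hnm hαsub
  set q := p.take n with hqdef
  set k := p.getD (n - 1) 0 with hk0
  have hqlen : q.length = n := by rw [hqdef]; simp [hpl]; omega
  have hkq : q.getLast?.getD 0 = k := by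
    have hqne : q ≠ [] := by
      intro h
      rw [h] at hqlen
      simp at hqlen
      omega
    rw [getLast?_getD q hqne, hqlen, hqdef, getD_take' p n (n - 1) (by omega)]
  -- rewrite uPos of α over range m
  have hαq : uPos eu s α q = ∑ v ∈ Finset.range m,
      ∑ i ∈ α.getD v ∅, (s.getD (p.getD v 0) 0 i : ℝ) * eu i := by
    unfold uPos
    rw [Finset.sum_subset (Finset.range_subset_range.2 hnm) (fun v _ hv => by
      rw [List.getD_eq_default _ _ (by simp only [Finset.mem_range] at hv; omega)]
      simp)]
    refine Finset.sum_congr rfl fun v _ => ?_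
    rcases lt_or_ge v n with h | h
    · rw [hqdef, getD_take' p n v h]
    · rw [List.getD_eq_default _ _ h]
      simp

  have hαsub' : ∀ v, α.getD v ∅ ⊆ t''.getD v ∅ := by
    intro v
    rcases lt_or_ge v n with h | h
    · exact hαsub v h
    · rw [List.getD_eq_default _ _ h]
      exact Finset.empty_subset _
  set E := ∑ v ∈ Finset.range m, ∑ i ∈ t''.getD v ∅ \ α.getD v ∅,
      (s.getD (p.getD v 0) 0 i : ℝ) * eu i with hE
  have hsplit : uPos eu s t'' p = uPos eu s α q + E := by
    rw [hαq, hE, ← Finset.sum_add_distrib]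
    unfold uPos
    refine Finset.sum_congr rfl fun v _ => ?_
    rw [← Finset.sum_sdiff (hαsub' v)]
    exact add_comm _ _
  have hcond : ∀ v < m, ∀ i ∈ t''.getD v ∅ \ α.getD v ∅,
      k < p.getD v 0 ∨ (p.getD v 0 = k ∧ iLast α < (i : WithBot I)) := by
    intro v hv i hi
    rcases lt_trichotomy v (n - 1) with h | h | h
    · exfalso
      have he : t''.getD v ∅ = α.getD v ∅ := by
        rw [hF2 v h, hep.2.2.1 v (by omega)]
      rw [he] at hi
      simp at hi
    · right
      rw [h] at hi ⊢
      exact ⟨by rw [hk0], hF5 i hi⟩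
    · left
      exact chain'_getD_lt p hp.2.1 h (by omega)
  have hEleRest : E ≤ uRest eu s α k := by
    have hg : ∀ j, (0:ℝ) ≤ ∑ i ∈ (s.getD j 0).support,
        if k < j ∨ (j = k ∧ iLast α < (i : WithBot I))
        then (s.getD j 0 i : ℝ) * eu i else 0 := by
      intro j
      refine Finset.sum_nonneg fun i _ => ?_
      split
      · exact mul_nonneg (Nat.cast_nonneg _) (le_of_lt (heu i))
      · exact le_refl 0
    rw [hE]
    calc ∑ v ∈ Finset.range m, ∑ i ∈ t''.getD v ∅ \ α.getD v ∅,
          (s.getD (p.getD v 0) 0 i : ℝ) * eu i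
        ≤ ∑ v ∈ Finset.range m, ∑ i ∈ (s.getD (p.getD v 0) 0).support,
            (if k < p.getD v 0 ∨ (p.getD v 0 = k ∧ iLast α < (i : WithBot I))
            then (s.getD (p.getD v 0) 0 i : ℝ) * eu i else 0) := by
          refine Finset.sum_le_sum fun v hv => ?_
          have hv' := Finset.mem_range.1 hv
          have step1 : ∑ i ∈ t''.getD v ∅ \ α.getD v ∅,
              (s.getD (p.getD v 0) 0 i : ℝ) * eu i
              = ∑ i ∈ t''.getD v ∅ \ α.getD v ∅,
                (if k < p.getD v 0 ∨ (p.getD v 0 = k ∧ iLast α < (i : WithBot I))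
                then (s.getD (p.getD v 0) 0 i : ℝ) * eu i else 0) :=
            Finset.sum_congr rfl fun i hi => (if_pos (hcond v hv' i hi)).symm
          rw [step1]
          refine Finset.sum_le_sum_of_subset_of_nonneg ?_ (fun i _ _ => ?_)
          · intro i hi
            have hpos := (hp.2.2 v hv').2 i (Finset.mem_sdiff.1 hi).1
            exact Finsupp.mem_support_iff.2 (Nat.pos_iff_ne_zero.1 hpos)
          · split
            · exact mul_nonneg (Nat.cast_nonneg _) (le_of_lt (heu i))
            · exact le_refl 0
      _ ≤ uRest eu s α k := by
          unfold uRest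
          exact sum_getD_le p m s.length (le_of_eq hpl.symm) hp.2.1
            (fun v hv => (hp.2.2 v hv).1) _ hg
  have hrm1 : r - 1 < m := by omega
  have hMt'' : M ∈ t''.getD (r - 1) ∅ := hsub'' (r - 1) (by omega) hMmem
  have hterm : 0 < (s.getD (p.getD (r - 1) 0) 0 M : ℝ) * eu M := by
    refine mul_pos ?_ (heu M)
    exact_mod_cast (hp.2.2 (r - 1) hrm1).2 M hMt''
  have hEpos : 0 < E := by
    rw [hE]
    have h1 : (s.getD (p.getD (r - 1) 0) 0 M : ℝ) * eu M
        ≤ ∑ i ∈ t''.getD (r - 1) ∅ \ α.getD (r - 1) ∅,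
          (s.getD (p.getD (r - 1) 0) 0 i : ℝ) * eu i :=
      Finset.single_le_sum
        (f := fun i => (s.getD (p.getD (r - 1) 0) 0 i : ℝ) * eu i)
        (fun i _ => mul_nonneg (Nat.cast_nonneg _) (le_of_lt (heu i)))
        (Finset.mem_sdiff.2 ⟨hMt'', hF4⟩)
    have h2 : ∑ i ∈ t''.getD (r - 1) ∅ \ α.getD (r - 1) ∅,
          (s.getD (p.getD (r - 1) 0) 0 i : ℝ) * eu i
        ≤ ∑ v ∈ Finset.range m, ∑ i ∈ t''.getD v ∅ \ α.getD v ∅,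
          (s.getD (p.getD v 0) 0 i : ℝ) * eu i :=
      Finset.single_le_sum
        (f := fun v => ∑ i ∈ t''.getD v ∅ \ α.getD v ∅,
          (s.getD (p.getD v 0) 0 i : ℝ) * eu i)
        (fun v _ => Finset.sum_nonneg fun i _ =>
          mul_nonneg (Nat.cast_nonneg _) (le_of_lt (heu i)))
        (Finset.mem_range.2 hrm1)
    linarith
  refine ⟨q, hq, ?_⟩
  have hur : 0 < uRest eu s α k := lt_of_lt_of_le hEpos hEleRest
  have hPE : PEUpos eu s α q = uPos eu s α q + uRest eu s α k := by
    unfold PEUpos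
    rw [hkq, if_pos hur]
  rw [hPE, hsplit]
  linarith

lemma uSeq_le (eu : I → ℝ) (heu : ∀ i, 0 < eu i) (s : List (I →₀ ℕ))
    (t' t'' : List (Finset I)) (h2 : 2 ≤ seqLen t') (hep : ExtPrefix t' t'')
    (hc : Contains s t'') : uSeq eu s t'' ≤ PEUseq eu s (parent t') := by
  obtain ⟨p₀, hp₀⟩ := hc
  refine csSup_le ⟨uPos eu s t'' p₀, p₀, hp₀, rfl⟩ ?_
  rintro x ⟨p, hp, rfl⟩
  obtain ⟨q, hq, hle⟩ := key_lemma eu heu s t' t'' h2 hep p hp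
  exact hle.trans (le_PEUseq eu heu s (parent t') q hq)

end Aux

/-- safety of the EUI pruning strategy: if `RSU(t') ≤ ξ`, then
`u(t') ≤ ξ` and every sequence `t''` having `t'` as an extension-prefix satisfies
`u(t'') ≤ ξ`. -/
theorem EUI_safe
    (eu : I → ℝ) (heu : ∀ i, 0 < eu i)
    (D : Multiset (List (I →₀ ℕ)))
    (t' : List (Finset I)) (ht' : ∀ X ∈ t', X.Nonempty)
    (h2 : 2 ≤ seqLen t')
    (ξ : ℝ) (hrsu : RSUDB eu D t' ≤ ξ) :
    uDB eu D t' ≤ ξ ∧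
    ∀ t'' : List (Finset I), (∀ X ∈ t'', X.Nonempty) →
      ExtPrefix t' t'' → uDB eu D t'' ≤ ξ := by
  have ht'ne : t' ≠ [] := by
    intro h
    rw [h] at h2
    simp [seqLen] at h2
  have hlastmem : t'.getD (t'.length - 1) ∅ ∈ t' := by
    have h : t'.length - 1 < t'.length := by
      have := List.length_pos_iff.2 ht'ne
      omega
    rw [List.getD_eq_getElem?_getD, List.getElem?_eq_getElem h]
    exact List.getElem_mem h
  have hepself : ExtPrefix t' t' :=
    ⟨ht'ne, le_refl _, fun v _ => rfl, ht' _ hlastmem, Finset.Subset.refl _,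
      fun a ha => by simp at ha⟩
  have main : ∀ t'' : List (Finset I), ExtPrefix t' t'' → uDB eu D t'' ≤ ξ := by
    intro t'' hep
    refine le_trans ?_ hrsu
    unfold uDB RSUDB
    refine Multiset.sum_map_le_sum_map _ _ fun s _ => ?_
    by_cases hc : Contains s t''
    · rw [if_pos hc]
      have hc' : Contains s t' := by
        obtain ⟨p, hp⟩ := hc
        exact ⟨_, isInstance_take s t' t'' p hp hep.2.1
          (fun v hv => extPrefix_sub hep v hv)⟩
      unfold RSUseq
      rw [if_pos hc']
      exact uSeq_le eu heu s t' t'' h2 hep hc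
    · rw [if_neg hc]
      unfold RSUseq
      split
      · next hc' =>
        obtain ⟨p, hp⟩ := hc'
        obtain ⟨q, hq, _⟩ := key_lemma eu heu s t' t' h2 hepself p hp
        exact le_trans (PEUpos_nonneg eu heu s (parent t') q)
          (le_PEUseq eu heu s (parent t') q hq)
      · exact le_refl 0
  exact ⟨main t' hepself, fun t'' _ hep => main t'' hep⟩


end TKUS
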